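/- For n ≥ 4, the hypercube Q_n, realized as the Cayley graph of H = (Z/2)^n with standard basis generators a_1,…,a_n, contains two edge-disjoint Hamiltonian cycles C_1 and C_2 such that C_1 contains the edge (0, a_n) and C_2 contains the edge (a_n, a_{n-1}+a_n). -/

import Mathlib

/-- The Cayley graph of an additive group `G` with connection set `S`. -/
def cayleyGraph (G : Type*) [AddGroup G] (S : Set G) : SimpleGraph G :=
  SimpleGraph.fromRel (fun g h => h - g ∈ S)

/-- The hypercube `Q_n`, realized as the Cayley graph of `(ℤ/2)^n` with the
standard basis vectors as connection set. -/
def cubeCayley (n : ℕ) : SimpleGraph (Fin n → ZMod 2) :=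
  cayleyGraph (Fin n → ZMod 2) {s | ∃ i : Fin n, s = Pi.single i 1}

/-!
Induction on `n`, starting from an explicit pair of cycles in `Q₄`. Write `Q_{n+1}` as two layers
`x ↦ (x, 0)` and `x ↦ (x, 1)` of `Q_n` joined by the rungs `(x, 0) ~ (x, 1)`. If a Hamiltonian
cycle of `Q_n` contains the edge `{u, u + t}`, the rest of it is a Hamiltonian path from `u` to
`u + t`; its translate by `t` runs from `u + t` back to `u`. Running the path in the bottom layer,
crossing the rung at `u + t`, running the translate in the top layer and closing with the rung at
`u` gives a Hamiltonian cycle of `Q_{n+1}`.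

Do this to `C₁ ∋ aⱼ, 0, aᵢ` at the edge `{0, aᵢ}` and to `C₂ ∋ aⱼ, aᵢ + aⱼ, aᵢ` at the parallel edge
`{aⱼ, aᵢ + aⱼ}`, with the same `t = aᵢ`. The layer edges of the new cycles come from the disjoint
`C₁`, `C₂` (translated by the same `t` on top), and their rungs sit at the four distinct vertices
`0, aᵢ, aⱼ, aᵢ + aⱼ`, so the new cycles are again edge-disjoint. With `a'` the new basis vector,
they pass through `a', 0, aⱼ` and `a', aⱼ + a', aⱼ` respectively, so the induction continues with
`(aᵢ, aⱼ)` replaced by `(aⱼ, a')`.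
-/

namespace SimpleGraph.Walk

variable {V : Type*} {G : SimpleGraph V} {u v : V}

theorem IsCycle.eq_snd_or_eq_penultimate_of_mem_edges {c : G.Walk u u} (hc : c.IsCycle)
    (huv : s(u, v) ∈ c.edges) : v = c.snd ∨ v = c.penultimate := by
  cases c with
  | nil => simp at huv
  | cons h p =>
    have hp := ((cons_isCycle_iff p h).mp hc).1
    rw [edges_cons, List.mem_cons] at huv
    rcases huv with huv | huv
    · exact Or.inl (by simpa using Sym2.congr_right.mp huv)
    · have hnil : ¬ p.Nil := edges_eq_nil.not.mp (List.ne_nil_of_mem huv)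
      rw [penultimate_cons_of_not_nil _ _ hnil]
      exact Or.inr (hp.eq_penultimate_of_mem_edges huv)

variable [DecidableEq V]

theorem IsHamiltonianCycle.exists_isHamiltonian_of_snd_eq {c : G.Walk u u}
    (hc : c.IsHamiltonianCycle) (hv : c.snd = v) :
    ∃ p : G.Walk u v, p.IsHamiltonian ∧ ∀ e, e ∈ c.edges ↔ e ∈ s(u, v) :: p.edges := by
  subst hv
  refine ⟨c.tail.reverse, fun x => ?_, fun e => ?_⟩
  · rw [support_reverse, List.count_reverse]
    exact hc.isHamiltonian_tail x
  · conv_lhs => rw [← c.cons_tail_eq hc.not_nil]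
    rw [edges_cons, edges_reverse, List.mem_cons, List.mem_cons, List.mem_reverse]

variable [Fintype V]

theorem IsHamiltonianCycle.reverse {c : G.Walk u u} (hc : c.IsHamiltonianCycle) :
    c.reverse.IsHamiltonianCycle :=
  isHamiltonianCycle_iff_isCycle_and_length_eq.mpr
    ⟨hc.isCycle.reverse, by rw [length_reverse, hc.length_eq]⟩

theorem IsHamiltonian.exists_isHamiltonianCycle {p : G.Walk u v} (hp : p.IsHamiltonian)
    (h : G.Adj v u) (hV : 3 ≤ Fintype.card V) (w : V) :
    ∃ c : G.Walk w w, c.IsHamiltonianCycle ∧ ∀ e, e ∈ c.edges ↔ e ∈ s(u, v) :: p.edges := by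
  have hlen := hp.length_eq
  have hc : (cons h p).IsHamiltonianCycle := by
    refine isHamiltonianCycle_iff_isCycle_and_length_eq.mpr ⟨?_, by simp; omega⟩
    refine (cons_isCycle_iff p h).mpr ⟨hp.isPath, fun hmem => ?_⟩
    have := hp.isPath.length_eq_one_of_mem_edges (Sym2.eq_swap ▸ hmem)
    omega
  refine ⟨(cons h p).rotate w (hc.mem_support w), hc.rotate _, fun e => ?_⟩
  rw [(rotate_edges _ _ _).mem_iff, edges_cons, Sym2.eq_swap]

theorem IsHamiltonianCycle.exists_isHamiltonian_of_mem_edges {w : V} {c : G.Walk w w}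
    (hc : c.IsHamiltonianCycle) (huv : s(u, v) ∈ c.edges) :
    ∃ p : G.Walk u v, p.IsHamiltonian ∧ ∀ e, e ∈ c.edges ↔ e ∈ s(u, v) :: p.edges := by
  have hu := c.fst_mem_support_of_mem_edges huv
  have hrot : ∀ e, e ∈ (c.rotate u hu).edges ↔ e ∈ c.edges :=
    fun e => (rotate_edges c u hu).mem_iff
  have hc' := hc.rotate hu
  rcases hc'.isCycle.eq_snd_or_eq_penultimate_of_mem_edges ((hrot _).mpr huv) with hv | hv
  · obtain ⟨p, hp, hedges⟩ := hc'.exists_isHamiltonian_of_snd_eq hv.symm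
    exact ⟨p, hp, fun e => (hrot e).symm.trans (hedges e)⟩
  · obtain ⟨p, hp, hedges⟩ :=
      hc'.reverse.exists_isHamiltonian_of_snd_eq ((snd_reverse _).trans hv.symm)
    refine ⟨p, hp, fun e => ?_⟩
    rw [← hrot, ← hedges, edges_reverse, List.mem_reverse]

end SimpleGraph.Walk

open SimpleGraph

namespace Fin

variable {n : ℕ} {α : Type*}

theorem snoc_add_snoc [Add α] (x y : Fin n → α) (a b : α) :
    (snoc x a : Fin (n + 1) → α) + snoc y b = snoc (x + y) (a + b) := by
  ext k
  induction k using lastCases <;> simp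

theorem snoc_zero_zero [Zero α] : (snoc (0 : Fin n → α) 0 : Fin (n + 1) → α) = 0 := by
  ext k
  induction k using lastCases <;> simp

end Fin

namespace Pi

variable {n : ℕ} {α : Type*} [Zero α]

theorem single_castSucc (i : Fin n) (a : α) :
    (single i.castSucc a : Fin (n + 1) → α) = Fin.snoc (single i a) 0 := by
  ext k
  induction k using Fin.lastCases with
  | last => simp [(Fin.castSucc_lt_last i).ne]
  | cast k => simp [Pi.single_apply]

theorem single_ne_single {ι : Type*} [DecidableEq ι] {a : α} (ha : a ≠ 0) {i j : ι}
    (hij : i ≠ j) : (single i a : ι → α) ≠ single j a :=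
  fun h => ha (by simpa [hij] using congrFun h i)

theorem single_last (a : α) : (single (Fin.last n) a : Fin (n + 1) → α) = Fin.snoc 0 a := by
  ext k
  induction k using Fin.lastCases with
  | last => simp
  | cast k => simp [(Fin.castSucc_lt_last k).ne]

end Pi

theorem ZModModule.add_cancel_right {G : Type*} [AddCommGroup G] [Module (ZMod 2) G] (x t : G) :
    x + t + t = x := by
  rw [add_assoc, ZModModule.add_self, add_zero]

namespace cayleyGraph

variable {G : Type*} [AddGroup G] {S : Set G}

theorem adj_iff {g h : G} : (cayleyGraph G S).Adj g h ↔ g ≠ h ∧ (h - g ∈ S ∨ g - h ∈ S) :=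
  Iff.rfl

variable (S) in
def addRightIso (t : G) : cayleyGraph G S ≃g cayleyGraph G S where
  toEquiv := Equiv.addRight t
  map_rel_iff' := by simp [adj_iff]

end cayleyGraph

namespace cubeCayley

variable {n : ℕ}

theorem adj_iff {x y : Fin n → ZMod 2} :
    (cubeCayley n).Adj x y ↔ ∃ i, x + y = Pi.single i 1 := by
  simp only [cubeCayley, cayleyGraph.adj_iff, Set.mem_ofPred_eq, ZModModule.sub_eq_add,
    add_comm y x, or_self]
  refine ⟨And.right, fun ⟨i, hi⟩ => ⟨fun hxy => ?_, i, hi⟩⟩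
  rw [hxy, ZModModule.add_self] at hi
  simpa using congrFun hi i

instance : DecidableRel (cubeCayley n).Adj := fun _ _ => decidable_of_iff _ adj_iff.symm

theorem three_le_card (hn : 1 ≤ n) : 3 ≤ Fintype.card (Fin (n + 1) → ZMod 2) := by
  rw [Fintype.card_fun, ZMod.card, Fintype.card_fin]
  calc 3 ≤ 2 ^ 2 := by norm_num
    _ ≤ 2 ^ (n + 1) := Nat.pow_le_pow_right two_pos (by omega)

/-! ### Layers of `Q_{n+1}` -/

def layer (c : ZMod 2) : cubeCayley n →g cubeCayley (n + 1) where
  toFun x := Fin.snoc x c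
  map_rel' h := by
    obtain ⟨i, hi⟩ := adj_iff.mp h
    exact adj_iff.mpr
      ⟨i.castSucc, by rw [Fin.snoc_add_snoc, hi, ZModModule.add_self, Pi.single_castSucc]⟩

theorem layer_apply (c : ZMod 2) (x : Fin n → ZMod 2) : layer c x = Fin.snoc x c := rfl

theorem layer_eq_layer_iff {c c' : ZMod 2} {x y : Fin n → ZMod 2} :
    layer c x = layer c' y ↔ c = c' ∧ x = y := by
  rw [layer_apply, layer_apply, Fin.snoc_inj, and_comm]

theorem layer_injective (c : ZMod 2) : Function.Injective (layer (n := n) c) :=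
  Fin.snoc_left_injective (α := fun _ => ZMod 2) c

theorem adj_layer_zero_layer_one (x : Fin n → ZMod 2) :
    (cubeCayley (n + 1)).Adj (layer 0 x) (layer 1 x) :=
  adj_iff.mpr ⟨Fin.last n, by
    rw [layer_apply, layer_apply, Fin.snoc_add_snoc, ZModModule.add_self, zero_add,
      Pi.single_last]⟩

theorem layer_zero_zero : layer 0 (0 : Fin n → ZMod 2) = 0 :=
  Fin.snoc_zero_zero

theorem layer_one_zero : layer 1 (0 : Fin n → ZMod 2) = Pi.single (Fin.last n) 1 :=
  (Pi.single_last 1).symm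

theorem layer_zero_single (j : Fin n) : layer 0 (Pi.single j 1) = Pi.single j.castSucc 1 :=
  (Pi.single_castSucc j 1).symm

theorem layer_one_single (j : Fin n) :
    layer 1 (Pi.single j 1) = Pi.single j.castSucc 1 + Pi.single (Fin.last n) 1 := by
  rw [Pi.single_castSucc, Pi.single_last, Fin.snoc_add_snoc, add_zero, zero_add, layer_apply]

theorem map_layer_eq_map_layer_iff {c c' : ZMod 2} {d d' : Sym2 (Fin n → ZMod 2)} :
    Sym2.map (layer c) d = Sym2.map (layer c') d' ↔ c = c' ∧ d = d' := by
  induction d using Sym2.ind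
  induction d' using Sym2.ind
  simp only [Sym2.map_mk, layer_apply, Sym2.eq_iff, Fin.snoc_inj]
  tauto

theorem map_layer_ne_rung (c : ZMod 2) (d : Sym2 (Fin n → ZMod 2)) (x : Fin n → ZMod 2) :
    Sym2.map (layer c) d ≠ s(layer 0 x, layer 1 x) := by
  induction d using Sym2.ind
  simp only [Sym2.map_mk, layer_apply, ne_eq, Sym2.eq_iff, Fin.snoc_inj]
  rintro (⟨⟨-, rfl⟩, -, h⟩ | ⟨⟨-, rfl⟩, -, h⟩) <;> exact absurd h (by decide)

theorem count_map_layer (l : List (Fin n → ZMod 2)) (x : Fin n → ZMod 2) (c d : ZMod 2) :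
    (l.map (layer d)).count (Fin.snoc x c) = if c = d then l.count x else 0 := by
  split_ifs with h
  · subst h
    exact List.count_map_of_injective _ _ (layer_injective c) x
  · exact List.count_eq_zero_of_not_mem (by simp [layer_apply, Ne.symm h])

/-! ### Doubling a Hamiltonian path -/

def translate (t : Fin n → ZMod 2) : cubeCayley n ≃g cubeCayley n :=
  cayleyGraph.addRightIso _ t

theorem translate_toHom_apply (t x : Fin n → ZMod 2) : (translate t).toHom x = x + t := rfl

variable {u v w : Fin n → ZMod 2}

def prismWalk (p : (cubeCayley n).Walk u v) (q : (cubeCayley n).Walk v w) :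
    (cubeCayley (n + 1)).Walk (layer 0 u) (layer 1 w) :=
  (p.map (layer 0)).append (.cons (adj_layer_zero_layer_one v) (q.map (layer 1)))

theorem support_prismWalk (p : (cubeCayley n).Walk u v) (q : (cubeCayley n).Walk v w) :
    (prismWalk p q).support = p.support.map (layer 0) ++ q.support.map (layer 1) := by
  rw [prismWalk, Walk.support_append, Walk.support_cons, List.tail_cons, Walk.support_map,
    Walk.support_map]

theorem edges_prismWalk (p : (cubeCayley n).Walk u v) (q : (cubeCayley n).Walk v w) :
    (prismWalk p q).edges = p.edges.map (Sym2.map (layer 0)) ++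
      s(layer 0 v, layer 1 v) :: q.edges.map (Sym2.map (layer 1)) := by
  rw [prismWalk, Walk.edges_append, Walk.edges_cons, Walk.edges_map, Walk.edges_map]

theorem _root_.SimpleGraph.Walk.IsHamiltonian.prismWalk {p : (cubeCayley n).Walk u v}
    {q : (cubeCayley n).Walk v w} (hp : p.IsHamiltonian) (hq : q.IsHamiltonian) :
    (prismWalk p q).IsHamiltonian := by
  intro z
  rw [← Fin.snoc_init_self z, support_prismWalk, List.count_append, count_map_layer,
    count_map_layer, hp, hq]
  generalize z (Fin.last n) = c
  revert c
  decide

def doublePath (t : Fin n → ZMod 2) (p : (cubeCayley n).Walk u (u + t)) :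
    (cubeCayley (n + 1)).Walk (layer 0 u) (layer 1 u) :=
  prismWalk p ((p.map (translate t).toHom).copy (translate_toHom_apply t u)
    ((translate_toHom_apply t (u + t)).trans (ZModModule.add_cancel_right u t)))

theorem _root_.SimpleGraph.Walk.IsHamiltonian.doublePath {t : Fin n → ZMod 2}
    {p : (cubeCayley n).Walk u (u + t)} (hp : p.IsHamiltonian) :
    (doublePath t p).IsHamiltonian :=
  hp.prismWalk fun x => by
    rw [Walk.support_copy]
    exact hp.map _ (translate t).bijective x

theorem edges_doublePath (t : Fin n → ZMod 2) (p : (cubeCayley n).Walk u (u + t)) :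
    (doublePath t p).edges = p.edges.map (Sym2.map (layer 0)) ++
      s(layer 0 (u + t), layer 1 (u + t)) ::
        (p.edges.map (Sym2.map (· + t))).map (Sym2.map (layer 1)) := by
  rw [doublePath, edges_prismWalk, Walk.edges_copy, Walk.edges_map]
  rfl

theorem map_layer_zero_mem_edges_doublePath {t : Fin n → ZMod 2}
    {p : (cubeCayley n).Walk u (u + t)} {d : Sym2 (Fin n → ZMod 2)} (hd : d ∈ p.edges) :
    Sym2.map (layer 0) d ∈ (doublePath t p).edges := by
  rw [edges_doublePath]
  exact List.mem_append_left _ (List.mem_map_of_mem hd)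

theorem map_layer_one_mem_edges_doublePath {t : Fin n → ZMod 2}
    {p : (cubeCayley n).Walk u (u + t)} {d : Sym2 (Fin n → ZMod 2)} (hd : d ∈ p.edges) :
    Sym2.map (layer 1) (Sym2.map (· + t) d) ∈ (doublePath t p).edges := by
  rw [edges_doublePath]
  exact List.mem_append_right _ (List.mem_cons_of_mem _
    (List.mem_map_of_mem (List.mem_map_of_mem hd)))

theorem disjoint_edges_doublePath {u' t : Fin n → ZMod 2} {p : (cubeCayley n).Walk u (u + t)}
    {q : (cubeCayley n).Walk u' (u' + t)} (hpq : p.edges.Disjoint q.edges)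
    (huu' : [u, u + t].Disjoint [u', u' + t]) :
    (s(layer 0 u, layer 1 u) :: (doublePath t p).edges).Disjoint
      (s(layer 0 u', layer 1 u') :: (doublePath t q).edges) := by
  intro e he he'
  simp only [edges_doublePath, List.mem_cons, List.mem_append, List.mem_map] at he he'
  have hτ := Sym2.map.injective (add_left_injective t)
  rcases he with rfl | ⟨d, hd, rfl⟩ | rfl | ⟨-, ⟨d, hd, rfl⟩, rfl⟩ <;>
  rcases he' with h | ⟨d', hd', h⟩ | h | ⟨-, ⟨d', hd', rfl⟩, h⟩ <;>
  simp_all [List.Disjoint, map_layer_eq_map_layer_iff, map_layer_ne_rung, layer_eq_layer_iff,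
    hτ.eq_iff]

/-! ### Pairs of edge-disjoint Hamiltonian cycles -/

def HamCyclePair (n : ℕ) (i j : Fin n) : Prop :=
  ∃ (C₁ : (cubeCayley n).Walk 0 0) (C₂ : (cubeCayley n).Walk (Pi.single j 1) (Pi.single j 1)),
    C₁.IsHamiltonianCycle ∧ C₂.IsHamiltonianCycle ∧ C₁.edges.Disjoint C₂.edges ∧
    s(0, Pi.single j 1) ∈ C₁.edges ∧ s(0, Pi.single i 1) ∈ C₁.edges ∧
    s(Pi.single j 1, Pi.single i 1 + Pi.single j 1) ∈ C₂.edges ∧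
    s(Pi.single i 1 + Pi.single j 1, Pi.single i 1) ∈ C₂.edges

theorem HamCyclePair.exists_isHamiltonian_paths {i j : Fin n} (hij : i ≠ j)
    (h : HamCyclePair n i j) :
    ∃ (P : (cubeCayley n).Walk 0 (0 + Pi.single i 1))
      (Q : (cubeCayley n).Walk (Pi.single j 1) (Pi.single j 1 + Pi.single i 1)),
      P.IsHamiltonian ∧ Q.IsHamiltonian ∧ P.edges.Disjoint Q.edges ∧
      s(0, Pi.single j 1) ∈ P.edges ∧
      s(Pi.single i 1 + Pi.single j 1, Pi.single i 1) ∈ Q.edges := by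
  obtain ⟨C₁, C₂, hC₁, hC₂, hC, h0j, h0i, hjij, hiji⟩ := h
  have haij := Pi.single_ne_single (one_ne_zero (α := ZMod 2)) hij
  obtain ⟨P, hP, hPe⟩ := hC₁.exists_isHamiltonian_of_mem_edges
    (u := 0) (v := 0 + Pi.single i 1) (by rwa [zero_add])
  obtain ⟨Q, hQ, hQe⟩ := hC₂.exists_isHamiltonian_of_mem_edges
    (u := Pi.single j 1) (v := Pi.single j 1 + Pi.single i 1) (by rwa [add_comm])
  refine ⟨P, Q, hP, hQ, fun d hdP hdQ => ?_, ?_, ?_⟩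
  · exact hC ((hPe d).mpr (List.mem_cons_of_mem _ hdP)) ((hQe d).mpr (List.mem_cons_of_mem _ hdQ))
  · refine (List.mem_cons.mp ((hPe _).mp h0j)).resolve_left fun h => ?_
    simp_all
  · refine (List.mem_cons.mp ((hQe _).mp hiji)).resolve_left fun h => ?_
    simp_all

theorem HamCyclePair.succ {i j : Fin n} (hij : i ≠ j) (h : HamCyclePair n i j) :
    HamCyclePair (n + 1) j.castSucc (Fin.last n) := by
  obtain ⟨P, Q, hP, hQ, hPQ, h0j, hiji⟩ := h.exists_isHamiltonian_paths hij
  have hcard := three_le_card (Nat.one_le_of_lt i.isLt)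
  obtain ⟨C₁, hC₁, hC₁e⟩ :=
    hP.doublePath.exists_isHamiltonianCycle (adj_layer_zero_layer_one _).symm hcard 0
  obtain ⟨C₂, hC₂, hC₂e⟩ := hQ.doublePath.exists_isHamiltonianCycle
    (adj_layer_zero_layer_one _).symm hcard (Pi.single (Fin.last n) 1)
  have hrungs : ([0, 0 + Pi.single i 1] : List (Fin n → ZMod 2)).Disjoint
      [Pi.single j 1, Pi.single j 1 + Pi.single i 1] := by
    have haij := Pi.single_ne_single (one_ne_zero (α := ZMod 2)) hij
    have hji : Pi.single j 1 + Pi.single i 1 ≠ (0 : Fin n → ZMod 2) := by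
      rwa [ne_eq, ← ZModModule.sub_eq_add, sub_eq_zero, eq_comm]
    simp [List.Disjoint, haij, hji, eq_comm]
  refine ⟨C₁, C₂, hC₁, hC₂, fun e he₁ he₂ =>
    disjoint_edges_doublePath hPQ hrungs ((hC₁e e).mp he₁) ((hC₂e e).mp he₂), ?_, ?_, ?_, ?_⟩
  · rw [hC₁e, ← layer_zero_zero, ← layer_one_zero]
    exact List.mem_cons_self
  · rw [hC₁e, ← layer_zero_zero, ← layer_zero_single]
    exact List.mem_cons_of_mem _ (map_layer_zero_mem_edges_doublePath h0j)
  · have := map_layer_one_mem_edges_doublePath hiji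
    rw [Sym2.map_mk, Sym2.map_mk, add_right_comm, ZModModule.add_self, zero_add,
      Sym2.eq_swap] at this
    rw [hC₂e, ← layer_one_single, ← layer_one_zero]
    exact List.mem_cons_of_mem _ this
  · rw [hC₂e, Sym2.eq_swap, ← layer_one_single, ← layer_zero_single]
    exact List.mem_cons_self

-- Vertices of `Q₄` are listed with coordinate `0` first.
def fourCubePath₁ : (cubeCayley 4).Walk ![0, 0, 0, 0] ![0, 0, 0, 1] :=
  Walk.ofSupport
    [![0, 0, 0, 0], ![0, 0, 1, 0], ![1, 0, 1, 0], ![1, 0, 0, 0], ![1, 1, 0, 0], ![0, 1, 0, 0],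
      ![0, 1, 1, 0], ![1, 1, 1, 0], ![1, 1, 1, 1], ![1, 1, 0, 1], ![1, 0, 0, 1], ![1, 0, 1, 1],
      ![0, 0, 1, 1], ![0, 1, 1, 1], ![0, 1, 0, 1], ![0, 0, 0, 1]]
    (List.cons_ne_nil _ _) (by decide)

def fourCubePath₂ : (cubeCayley 4).Walk ![0, 0, 1, 1] ![0, 0, 0, 1] :=
  Walk.ofSupport
    [![0, 0, 1, 1], ![0, 0, 1, 0], ![0, 1, 1, 0], ![0, 1, 1, 1], ![1, 1, 1, 1], ![1, 0, 1, 1],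
      ![1, 0, 1, 0], ![1, 1, 1, 0], ![1, 1, 0, 0], ![1, 1, 0, 1], ![0, 1, 0, 1], ![0, 1, 0, 0],
      ![0, 0, 0, 0], ![1, 0, 0, 0], ![1, 0, 0, 1], ![0, 0, 0, 1]]
    (List.cons_ne_nil _ _) (by decide)

theorem isHamiltonian_fourCubePath₁ : fourCubePath₁.IsHamiltonian := by
  unfold Walk.IsHamiltonian
  decide

theorem isHamiltonian_fourCubePath₂ : fourCubePath₂.IsHamiltonian := by
  unfold Walk.IsHamiltonian
  decide

set_option maxRecDepth 2000 in
theorem hamCyclePair_four : HamCyclePair 4 2 3 := by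
  have hcard := three_le_card (n := 3) (by norm_num)
  obtain ⟨C₁, hC₁, hC₁e⟩ :=
    isHamiltonian_fourCubePath₁.exists_isHamiltonianCycle (by decide) hcard 0
  obtain ⟨C₂, hC₂, hC₂e⟩ :=
    isHamiltonian_fourCubePath₂.exists_isHamiltonianCycle (by decide) hcard (Pi.single 3 1)
  refine ⟨C₁, C₂, hC₁, hC₂, fun e h₁ h₂ => ?_, (hC₁e _).mpr (by decide),
    (hC₁e _).mpr (by decide), (hC₂e _).mpr (by decide), (hC₂e _).mpr (by decide)⟩
  rw [hC₁e] at h₁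
  rw [hC₂e] at h₂
  exact (by decide : ∀ e ∈ s(![0, 0, 0, 0], ![0, 0, 0, 1]) :: fourCubePath₁.edges,
    e ∉ s(![0, 0, 1, 1], ![0, 0, 0, 1]) :: fourCubePath₂.edges) e h₁ h₂

theorem hamCyclePair_add_four (m : ℕ) :
    HamCyclePair (m + 4) ⟨m + 2, by omega⟩ (Fin.last (m + 3)) := by
  induction m with
  | zero => exact hamCyclePair_four
  | succ m ih => exact ih.succ (by simp [Fin.ext_iff])

end cubeCayley

/-- For `n ≥ 4`, `Q_n` contains two edge-disjoint Hamiltonian cycles `C₁`, `C₂`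
with `(0, aₙ)` an edge of `C₁` and `(aₙ, aₙ₋₁ + aₙ)` an edge of `C₂`. -/
theorem hypercube_EDHC_through_edges (n : ℕ) (hn : 4 ≤ n) :
    ∃ (c₁ : (cubeCayley n).Walk 0 0)
      (c₂ : (cubeCayley n).Walk (Pi.single (⟨n - 1, by omega⟩ : Fin n) (1 : ZMod 2))
        (Pi.single (⟨n - 1, by omega⟩ : Fin n) (1 : ZMod 2))),
      c₁.IsHamiltonianCycle ∧ c₂.IsHamiltonianCycle ∧
      (∀ e, e ∈ c₁.edges → e ∉ c₂.edges) ∧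
      s((0 : Fin n → ZMod 2), Pi.single (⟨n - 1, by omega⟩ : Fin n) (1 : ZMod 2)) ∈ c₁.edges ∧
      s(Pi.single (⟨n - 1, by omega⟩ : Fin n) (1 : ZMod 2),
        Pi.single (⟨n - 2, by omega⟩ : Fin n) (1 : ZMod 2) +
          Pi.single (⟨n - 1, by omega⟩ : Fin n) (1 : ZMod 2)) ∈ c₂.edges := by
  obtain ⟨m, rfl⟩ := Nat.exists_eq_add_of_le' hn
  obtain ⟨C₁, C₂, hC₁, hC₂, hC, h₀, -, h₂, -⟩ := cubeCayley.hamCyclePair_add_four m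
  exact ⟨C₁, C₂, hC₁, hC₂, fun e he₁ he₂ => hC he₁ he₂, h₀, h₂⟩
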